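/- arXiv:math/0406210 — 4 statements merged into one kernel-verified Lean document; each statement's English description precedes it below -/
import Mathlib

section
/- Let n, d ∈ ℕ and let r : Fin d → (formal power series in the variables Fin n ⊕ Fin d over ℝ) be such that for each j, every coefficient of r j in total degree ≤ 1 vanishes (r j has order ≥ 2). Then there exists a unique family v : Fin d → (formal power series in the variables Fin n over ℝ) with zero constant terms such that for every j, v j equals the substitution of the family (Sum.inl i ↦ X_i, Sum.inr l ↦ v l) into r j; that is, v is the unique formal solution with zero constant term of the system v = r(x, v). -/
/-!
On families `v` with zero constant terms, `Φ v = r(x, v)` is a contraction for the relation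
"agree in all degrees `< N`": as `r` has order `≥ 2`, only monomials `v ^ d` with `|d| ≥ 2`
occur, and if `v - w` vanishes below degree `N` then `v ^ d - w ^ d` vanishes below degree
`N + |d| - 1 ≥ N + 1`. Hence the iterates `Φ^[k] 0` stabilise degree by degree to a fixed
point, and any two fixed points agree in every degree.
-/

open MvPowerSeries

open Classical in
/-- The finite set of multi-indices on a finite type `σ` of total degree at most `k`. -/
noncomputable def degLE (σ : Type*) [Fintype σ] (k : ℕ) : Finset (σ →₀ ℕ) :=
  (Finset.Iic (Finsupp.equivFunOnFinite.symm (fun _ : σ => k))).filter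
    (fun d => (d.sum fun _ n => n) ≤ k)

/-- Truncation of a multivariate power series to total degree at most `k`,
as a multivariate polynomial. -/
noncomputable def truncTotalDeg {σ : Type*} [Fintype σ] (k : ℕ)
    (f : MvPowerSeries σ ℝ) : MvPolynomial σ ℝ :=
  ∑ d ∈ degLE σ k, MvPolynomial.monomial d (MvPowerSeries.coeff d f)

/-- Substitution of the family `g` (assumed to have zero constant terms) into
the power series `f`: the coefficient at the multi-index `e` only involves
the terms of `f` of total degree at most `|e|`. -/
noncomputable def psSubst {σ τ : Type*} [Fintype σ]
    (f : MvPowerSeries σ ℝ) (g : σ → MvPowerSeries τ ℝ) : MvPowerSeries τ ℝ :=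
  fun e => MvPowerSeries.coeff e
    (MvPolynomial.aeval g (truncTotalDeg (e.sum fun _ n => n) f))

namespace MvPowerSeries

variable {σ τ R : Type*}

section CommRing

variable [CommRing R]

theorem le_order_prod_sub_prod {ι : Type*} (s : Finset ι) (a b : ι → MvPowerSeries τ R)
    (m : ι → ℕ) (c : ℕ∞) (ha : ∀ i ∈ s, m i ≤ (a i).order) (hb : ∀ i ∈ s, m i ≤ (b i).order)
    (hab : ∀ i ∈ s, m i + c ≤ (a i - b i).order) :
    (∑ i ∈ s, m i : ℕ) + c ≤ (∏ i ∈ s, a i - ∏ i ∈ s, b i).order := by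
  classical
  induction s using Finset.induction_on with
  | empty => simp
  | insert i s hi ih =>
    have hs : ∀ f : ι → MvPowerSeries τ R, (∀ j ∈ s, m j ≤ (f j).order) →
        ((∑ j ∈ s, m j : ℕ) : ℕ∞) ≤ (∏ j ∈ s, f j).order := fun f hf => by
      push_cast
      exact (Finset.sum_le_sum hf).trans (le_order_prod f s)
    have hsplit : ∏ j ∈ insert i s, a j - ∏ j ∈ insert i s, b j =
        (a i - b i) * ∏ j ∈ s, a j + b i * (∏ j ∈ s, a j - ∏ j ∈ s, b j) := by
      rw [Finset.prod_insert hi, Finset.prod_insert hi]; ring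
    rw [hsplit, Finset.sum_insert hi]
    refine le_trans ?_ min_order_le_add
    refine le_min (le_trans ?_ le_order_mul) (le_trans ?_ le_order_mul)
    · calc ((m i + ∑ j ∈ s, m j : ℕ) : ℕ∞) + c = (m i + c) + (∑ j ∈ s, m j : ℕ) := by
            push_cast; ring
        _ ≤ _ := add_le_add (hab i (by simp)) (hs a fun j hj => ha j (by simp [hj]))
    · calc ((m i + ∑ j ∈ s, m j : ℕ) : ℕ∞) + c = m i + ((∑ j ∈ s, m j : ℕ) + c) := by
            push_cast; ring
        _ ≤ _ := add_le_add (hb i (by simp)) (ih (fun j hj => ha j (by simp [hj]))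
          (fun j hj => hb j (by simp [hj])) (fun j hj => hab j (by simp [hj])))

theorem le_order_pow_sub_pow {x y : MvPowerSeries τ R} (hx : constantCoeff x = 0)
    (hy : constantCoeff y = 0) {c : ℕ∞} (hxy : 1 + c ≤ (x - y).order) (k : ℕ) :
    k + c ≤ (x ^ k - y ^ k).order := by
  have h := le_order_prod_sub_prod (Finset.range k) (fun _ => x) (fun _ => y) (fun _ => 1) c
    (fun _ _ => by simpa using one_le_order_iff_constCoeff_eq_zero.2 hx)
    (fun _ _ => by simpa using one_le_order_iff_constCoeff_eq_zero.2 hy) (fun _ _ => by simpa)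
  simpa using h

theorem le_order_prod_pow {g : σ → MvPowerSeries τ R} (hg : ∀ i, constantCoeff (g i) = 0)
    (d : σ →₀ ℕ) : (d.degree : ℕ∞) ≤ (d.prod fun i k => g i ^ k).order := by
  rw [Finsupp.degree_apply, Nat.cast_sum]
  exact (Finset.sum_le_sum fun i _ => le_order_pow_of_constantCoeff_eq_zero _ (hg i)).trans
    (le_order_prod _ _)

theorem le_order_prod_pow_sub_prod_pow {g g' : σ → MvPowerSeries τ R}
    (hg : ∀ i, constantCoeff (g i) = 0) (hg' : ∀ i, constantCoeff (g' i) = 0) {c : ℕ∞}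
    (h : ∀ i, 1 + c ≤ (g i - g' i).order) (d : σ →₀ ℕ) :
    d.degree + c ≤ ((d.prod fun i k => g i ^ k) - d.prod fun i k => g' i ^ k).order :=
  le_order_prod_sub_prod d.support _ _ d c
    (fun i _ => le_order_pow_of_constantCoeff_eq_zero _ (hg i))
    (fun i _ => le_order_pow_of_constantCoeff_eq_zero _ (hg' i))
    (fun i _ => le_order_pow_sub_pow (hg i) (hg' i) (h i) (d i))

end CommRing

section EqBelow

variable [Semiring R]

def EqBelow (N : ℕ) (f g : MvPowerSeries τ R) : Prop :=
  ∀ e : τ →₀ ℕ, e.degree < N → coeff e f = coeff e g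

theorem eqBelow_zero (f g : MvPowerSeries τ R) : EqBelow 0 f g := fun _ h => absurd h (by omega)

theorem EqBelow.symm {N : ℕ} {f g : MvPowerSeries τ R} (h : EqBelow N f g) : EqBelow N g f :=
  fun e he => (h e he).symm

theorem EqBelow.trans {N : ℕ} {f g h : MvPowerSeries τ R} (hfg : EqBelow N f g)
    (hgh : EqBelow N g h) : EqBelow N f h :=
  fun e he => (hfg e he).trans (hgh e he)

theorem eq_of_forall_eqBelow {f g : MvPowerSeries τ R} (h : ∀ N, EqBelow N f g) : f = g :=
  ext fun e => h (e.degree + 1) e (Nat.lt_succ_self _)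

theorem eqBelow_one_iff {f g : MvPowerSeries τ R} :
    EqBelow 1 f g ↔ constantCoeff f = constantCoeff g := by
  refine ⟨fun h => by simpa using h 0 (by simp), fun h e he => ?_⟩
  rw [(Finsupp.degree_eq_zero_iff e).1 (by omega), coeff_zero_eq_constantCoeff_apply,
    coeff_zero_eq_constantCoeff_apply, h]

end EqBelow

theorem eqBelow_iff_le_order_sub [Ring R] {N : ℕ} {f g : MvPowerSeries τ R} :
    EqBelow N f g ↔ (N : ℕ∞) ≤ (f - g).order := by
  refine ⟨fun h => nat_le_order fun e he => by rw [map_sub, h e he, sub_self], fun h e he => ?_⟩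
  rw [← sub_eq_zero, ← map_sub]
  exact coeff_of_lt_order (lt_of_lt_of_le (by exact_mod_cast he) h)

section FixedPoint

variable {ι : Type*} [Semiring R]

theorem existsUnique_fixedPoint_of_eqBelow_succ
    (Φ : (ι → MvPowerSeries τ R) → ι → MvPowerSeries τ R)
    (hΦ₀ : ∀ v, (∀ i, constantCoeff (v i) = 0) → ∀ i, constantCoeff (Φ v i) = 0)
    (hΦ : ∀ N v w, (∀ i, constantCoeff (v i) = 0) → (∀ i, constantCoeff (w i) = 0) →
      (∀ i, EqBelow N (v i) (w i)) → ∀ i, EqBelow (N + 1) (Φ v i) (Φ w i)) :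
    ∃! v : ι → MvPowerSeries τ R, (∀ i, constantCoeff (v i) = 0) ∧ ∀ i, v i = Φ v i := by
  set x : ℕ → ι → MvPowerSeries τ R := fun k => Φ^[k] 0 with hx
  have hx_succ (k : ℕ) : x (k + 1) = Φ (x k) := Function.iterate_succ_apply' Φ k 0
  have hx₀ (k : ℕ) : ∀ i, constantCoeff (x k i) = 0 := by
    induction k with
    | zero => simp [hx]
    | succ k ih => rw [hx_succ]; exact hΦ₀ _ ih
  have hx_stable (N : ℕ) : ∀ k, N ≤ k → ∀ i, EqBelow N (x k i) (x N i) := by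
    induction N with
    | zero => exact fun _ _ _ => eqBelow_zero _ _
    | succ N ih =>
      rintro (_ | k) hk
      · omega
      rw [hx_succ, hx_succ]
      exact hΦ N _ _ (hx₀ k) (hx₀ N) (ih k (by omega))
  -- the coefficient of degree `|e|` has stabilised from the iterate `|e| + 1` on
  let v : ι → MvPowerSeries τ R := fun i e => coeff e (x (e.degree + 1) i)
  have hv (N : ℕ) (i : ι) : EqBelow N (v i) (x N i) := fun e he =>
    (hx_stable (e.degree + 1) N (by omega) i e (Nat.lt_succ_self _)).symm
  have hv₀ (i : ι) : constantCoeff (v i) = 0 := by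
    rw [eqBelow_one_iff.1 (hv 1 i), hx₀]
  have hv_fixed (i : ι) : v i = Φ v i := eq_of_forall_eqBelow fun
    | 0 => eqBelow_zero _ _
    | N + 1 => by
      refine (hv (N + 1) i).trans ?_
      rw [hx_succ]
      exact hΦ N _ _ (hx₀ N) hv₀ (fun j => (hv N j).symm) i
  refine ⟨v, ⟨hv₀, hv_fixed⟩, fun w ⟨hw₀, hw_fixed⟩ => funext fun i => ?_⟩
  have h (N : ℕ) : ∀ i, EqBelow N (w i) (v i) := by
    induction N with
    | zero => exact fun _ => eqBelow_zero _ _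
    | succ N ih =>
      intro i
      rw [hw_fixed i, hv_fixed i]
      exact hΦ N w v hw₀ hv₀ ih i
  exact eq_of_forall_eqBelow fun N => h N i

end FixedPoint

end MvPowerSeries

section psSubst

variable {σ τ : Type*} [Fintype σ]

theorem coeff_psSubst (f : MvPowerSeries σ ℝ) (g : σ → MvPowerSeries τ ℝ) (e : τ →₀ ℕ) :
    coeff e (psSubst f g) =
      ∑ d ∈ degLE σ e.degree, coeff d f * coeff e (d.prod fun i k => g i ^ k) := by
  change coeff e (MvPolynomial.aeval g (truncTotalDeg e.degree f)) = _
  simp only [truncTotalDeg, map_sum, MvPolynomial.aeval_monomial, ← Algebra.smul_def,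
    LinearMap.map_smul, smul_eq_mul]

theorem constantCoeff_psSubst {f : MvPowerSeries σ ℝ} (hf : constantCoeff f = 0)
    {g : σ → MvPowerSeries τ ℝ} (hg : ∀ i, constantCoeff (g i) = 0) :
    constantCoeff (psSubst f g) = 0 := by
  rw [← coeff_zero_eq_constantCoeff_apply, coeff_psSubst]
  refine Finset.sum_eq_zero fun d _ => ?_
  rcases eq_or_ne d 0 with rfl | hd
  · rw [coeff_zero_eq_constantCoeff_apply, hf, zero_mul]
  · rw [coeff_of_lt_order ((le_order_prod_pow hg d).trans_lt' ?_), mul_zero]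
    simpa [pos_iff_ne_zero, Finsupp.degree_eq_zero_iff] using hd

theorem psSubst_eqBelow_succ {f : MvPowerSeries σ ℝ} (hf : 2 ≤ f.order)
    {g g' : σ → MvPowerSeries τ ℝ} (hg : ∀ i, constantCoeff (g i) = 0)
    (hg' : ∀ i, constantCoeff (g' i) = 0) {N : ℕ} (hgg' : ∀ i, EqBelow N (g i) (g' i)) :
    EqBelow (N + 1) (psSubst f g) (psSubst f g') := by
  obtain _ | N := N
  · rw [eqBelow_one_iff, constantCoeff_psSubst _ hg, constantCoeff_psSubst _ hg']
    all_goals exact one_le_order_iff_constCoeff_eq_zero.1 (le_trans (by norm_num) hf)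
  intro e he
  rw [coeff_psSubst, coeff_psSubst]
  refine Finset.sum_congr rfl fun d _ => ?_
  rcases lt_or_ge d.degree 2 with hd | hd
  · rw [coeff_of_lt_order (lt_of_lt_of_le (by exact_mod_cast hd) hf), zero_mul, zero_mul]
  have hord := le_order_prod_pow_sub_prod_pow hg hg'
    (fun i => by simpa [add_comm] using eqBelow_iff_le_order_sub.1 (hgg' i)) d
  have h : EqBelow (e.degree + 1) (d.prod fun i k => g i ^ k) (d.prod fun i k => g' i ^ k) :=
    eqBelow_iff_le_order_sub.2 <|
      le_trans (by exact_mod_cast (by omega : e.degree + 1 ≤ d.degree + N)) hord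
  rw [h e (Nat.lt_succ_self _)]

end psSubst

/-- The formal implicit function theorem: the system `v = r(x, v)`, with `r` of
order ≥ 2, has a unique formal power series solution `v` with zero constant term. -/
theorem formal_implicit_function_theorem (n d : ℕ)
    (r : Fin d → MvPowerSeries (Fin n ⊕ Fin d) ℝ)
    (hr : ∀ j, ∀ m : (Fin n ⊕ Fin d) →₀ ℕ, (m.sum fun _ a => a) ≤ 1 →
      MvPowerSeries.coeff m (r j) = 0) :
    ∃! v : Fin d → MvPowerSeries (Fin n) ℝ,
      (∀ j, MvPowerSeries.constantCoeff (σ := Fin n) (R := ℝ) (v j) = 0) ∧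
      ∀ j, v j = psSubst (r j) (Sum.elim (fun i => MvPowerSeries.X i) v) := by
  have hr₂ (j : Fin d) : 2 ≤ (r j).order := by
    exact_mod_cast nat_le_order fun m hm => hr j m (Nat.lt_succ_iff.1 hm)
  have hr₁ (j : Fin d) : constantCoeff (r j) = 0 :=
    one_le_order_iff_constCoeff_eq_zero.1 (le_trans (by norm_num) (hr₂ j))
  have hX₀ {v : Fin d → MvPowerSeries (Fin n) ℝ} (hv : ∀ j, constantCoeff (v j) = 0) :
      ∀ i, constantCoeff (Sum.elim (fun i => X i) v i) = 0 :=
    Sum.forall.2 ⟨fun i => constantCoeff_X i, hv⟩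
  refine existsUnique_fixedPoint_of_eqBelow_succ _
    (fun v hv j => constantCoeff_psSubst (hr₁ j) (hX₀ hv))
    (fun N v w hv hw hvw j => psSubst_eqBelow_succ (hr₂ j) (hX₀ hv) (hX₀ hw) ?_)
  exact Sum.forall.2 ⟨fun i e _ => rfl, hvw⟩
end

section
/- Let p, q ∈ ℕ with p < q, and let P : Fin q → MvPolynomial (Fin p) ℝ be a q-tuple of real polynomials in p variables. Then there exists a nonzero polynomial Q ∈ MvPolynomial (Fin q) ℝ such that for every x : Fin p → ℝ, evaluating Q at the point (j ↦ eval x (P j)) gives 0; that is, Q vanishes identically on the range of the polynomial map x ↦ (eval x (P 1), …, eval x (P q)) from ℝ^p to ℝ^q. -/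
open MvPolynomial

/-- Degree bound for substitution: if each `P j` has total degree at most `D`, then
`aeval P Q` has total degree at most `Q.totalDegree * D`. -/
lemma aeval_totalDegree_le {p q : ℕ} (P : Fin q → MvPolynomial (Fin p) ℝ) (D : ℕ)
    (hP : ∀ j, (P j).totalDegree ≤ D) (Q : MvPolynomial (Fin q) ℝ) :
    (MvPolynomial.aeval P Q).totalDegree ≤ Q.totalDegree * D := by
  conv_lhs => rw [Q.as_sum]
  rw [map_sum]
  refine le_trans (MvPolynomial.totalDegree_finset_sum _ _) (Finset.sup_le fun d hd => ?_)
  rw [MvPolynomial.aeval_monomial]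
  refine le_trans (MvPolynomial.totalDegree_mul _ _) ?_
  have h1 : (algebraMap ℝ (MvPolynomial (Fin p) ℝ) (Q.coeff d)).totalDegree = 0 := by
    simp [MvPolynomial.algebraMap_eq]
  rw [h1, zero_add]
  rw [Finsupp.prod]
  refine le_trans (MvPolynomial.totalDegree_finset_prod _ _) ?_
  calc ∑ i ∈ d.support, ((P i) ^ (d i)).totalDegree
      ≤ ∑ i ∈ d.support, d i * D := by
        refine Finset.sum_le_sum fun i _ => ?_
        exact le_trans (MvPolynomial.totalDegree_pow _ _)
          (Nat.mul_le_mul_left _ (hP i))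
    _ = (∑ i ∈ d.support, d i) * D := by rw [Finset.sum_mul]
    _ ≤ Q.totalDegree * D :=
        Nat.mul_le_mul_right _ (MvPolynomial.le_totalDegree hd)

/-- The dimension of the space of polynomials in `k` variables with degree at most `N`
in each variable is `(N+1)^k`. -/
lemma finrank_restrictDegree (k N : ℕ) :
    Module.finrank ℝ (MvPolynomial.restrictDegree (Fin k) ℝ N) = (N + 1) ^ k := by
  have hfin : Finite {f : Fin k →₀ ℕ | ∀ i, f i ≤ N} :=
    ((Set.Finite.pi' fun _ ↦ Set.finite_le_nat _).preimage
      DFunLike.coe_injective.injOn).to_subtype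
  have : Fintype {f : Fin k →₀ ℕ | ∀ i, f i ≤ N} := Fintype.ofFinite _
  have e : {f : Fin k →₀ ℕ | ∀ i, f i ≤ N} ≃ (Fin k → Fin (N + 1)) :=
    { toFun := fun f i => ⟨f.1 i, Nat.lt_succ_of_le (f.2 i)⟩
      invFun := fun g =>
        ⟨Finsupp.equivFunOnFinite.symm fun i => (g i : ℕ), fun i => by
          simpa using Nat.lt_succ_iff.mp (g i).2⟩
      left_inv := fun f => by
        ext i
        simp
      right_inv := fun g => by
        ext i
        simp }
  rw [MvPolynomial.restrictDegree,
    Module.finrank_eq_card_basis (MvPolynomial.basisRestrictSupport ℝ _),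
    Fintype.card_congr e]
  simp

/-- The range of a polynomial map from `ℝ^p` to `ℝ^q` with `p < q` is contained in
the zero set of a nonzero polynomial. -/
theorem polynomial_map_range_in_proper_algebraic_set (p q : ℕ) (hpq : p < q)
    (P : Fin q → MvPolynomial (Fin p) ℝ) :
    ∃ Q : MvPolynomial (Fin q) ℝ, Q ≠ 0 ∧
      ∀ x : Fin p → ℝ,
        MvPolynomial.eval (fun j => MvPolynomial.eval x (P j)) Q = 0 := by
  obtain ⟨Q, hQ0, hQ⟩ : ∃ Q : MvPolynomial (Fin q) ℝ, Q ≠ 0 ∧ MvPolynomial.aeval P Q = 0 := by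
    by_contra h
    push_neg at h
    have hinj : Function.Injective (MvPolynomial.aeval (R := ℝ) P) := by
      intro a b hab
      by_contra hne
      exact h (a - b) (sub_ne_zero.mpr hne) (by rw [map_sub, hab, sub_self])
    -- degree bound setup
    set D : ℕ := (Finset.univ.sup fun j => (P j).totalDegree) + 1 with hD
    have hPD : ∀ j, (P j).totalDegree ≤ D := fun j => by
      rw [hD]
      exact Nat.le_succ_of_le (Finset.le_sup (f := fun j => (P j).totalDegree) (Finset.mem_univ j))
    set m : ℕ := (q * D) ^ p with hm
    -- the restricted linear map
    have hmap : ∀ Q ∈ MvPolynomial.restrictDegree (Fin q) ℝ m,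
        (MvPolynomial.aeval P).toLinearMap Q ∈
          MvPolynomial.restrictDegree (Fin p) ℝ (q * m * D) := by
      intro Q hQ
      refine MvPolynomial.restrictTotalDegree_le_restrictDegree _ _ _ ?_
      rw [MvPolynomial.mem_restrictTotalDegree]
      have hQdeg : Q.totalDegree ≤ q * m := by
        rw [MvPolynomial.mem_restrictDegree] at hQ
        refine Finset.sup_le fun d hd => ?_
        calc (d.sum fun _ e => e) = ∑ i ∈ d.support, d i := rfl
          _ ≤ ∑ _i ∈ d.support, m := Finset.sum_le_sum fun i _ => hQ d hd i
          _ = d.support.card * m := by rw [Finset.sum_const, smul_eq_mul]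
          _ ≤ q * m := Nat.mul_le_mul_right _ (by
              simpa using Finset.card_le_card (Finset.subset_univ d.support))
      calc (MvPolynomial.aeval P Q).totalDegree ≤ Q.totalDegree * D :=
            aeval_totalDegree_le P D hPD Q
        _ ≤ q * m * D := Nat.mul_le_mul_right _ hQdeg
    have hinj' : Function.Injective ((MvPolynomial.aeval P).toLinearMap.restrict hmap) := by
      intro a b hab
      apply Subtype.ext
      exact hinj (congrArg Subtype.val hab)
    have hle := LinearMap.finrank_le_finrank_of_injective hinj'
    rw [finrank_restrictDegree, finrank_restrictDegree] at hle
    -- numeric contradiction: (q*m*D+1)^p < (m+1)^q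
    have hq1 : 1 ≤ q := Nat.one_le_of_lt hpq
    have hqD : 1 ≤ q * D := Nat.one_le_iff_ne_zero.mpr (by positivity)
    have hnum : (q * m * D + 1) ^ p < (m + 1) ^ q := by
      calc (q * m * D + 1) ^ p ≤ (q * D * (m + 1)) ^ p := by
            apply Nat.pow_le_pow_left
            calc q * m * D + 1 = q * D * m + 1 := by ring_nf
              _ ≤ q * D * m + q * D := by omega
              _ = q * D * (m + 1) := by ring
        _ = m * (m + 1) ^ p := by rw [Nat.mul_pow, hm]
        _ < (m + 1) * (m + 1) ^ p := by
            exact Nat.mul_lt_mul_of_pos_right (Nat.lt_succ_self m)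
              (Nat.pow_pos (Nat.succ_pos m))
        _ = (m + 1) ^ (p + 1) := by ring
        _ ≤ (m + 1) ^ q := Nat.pow_le_pow_right (Nat.succ_pos m) hpq
    omega
  refine ⟨Q, hQ0, fun x => ?_⟩
  have h1 : (MvPolynomial.aeval (R := ℝ) x).comp (MvPolynomial.aeval P) =
      MvPolynomial.aeval fun j => MvPolynomial.aeval x (P j) := MvPolynomial.comp_aeval _ _
  have h2 := congrArg (fun f => f Q) h1  -- : aeval x (aeval P Q) = aeval (fun j => aeval x (P j)) Q
  simp only [AlgHom.comp_apply, hQ, map_zero] at h2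
  have h3 : ∀ (k : ℕ) (y : Fin k → ℝ) (r : MvPolynomial (Fin k) ℝ),
      MvPolynomial.aeval y r = MvPolynomial.eval y r := fun k y r => by
    rw [MvPolynomial.aeval_def, MvPolynomial.eval]
    simp [MvPolynomial.eval₂Hom]
  simp only [h3] at h2
  exact h2.symm
end

section
/- Let p, q ∈ ℕ with p < q, and let P : Fin q → MvPolynomial (Fin p) ℝ be a q-tuple of real polynomials in p variables. Then the range of the polynomial map x ↦ (eval x (P j))_{j} from ℝ^p to ℝ^q is a meagre subset of ℝ^q. -/
open MeasureTheory

lemma mvpoly_differentiable {n : ℕ} (Q : MvPolynomial (Fin n) ℝ) :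
    Differentiable ℝ (fun x : Fin n → ℝ => MvPolynomial.eval x Q) := by
  induction Q using MvPolynomial.induction_on with
  | C a => simpa using differentiable_const a
  | add f g hf hg => simp only [map_add]; exact hf.add hg
  | mul_X f i hf =>
      simp only [map_mul, MvPolynomial.eval_X]
      exact hf.mul (ContinuousLinearMap.proj (R := ℝ) (φ := fun _ : Fin n => ℝ) i).differentiable

/-- The range of a polynomial map from `ℝ^p` to `ℝ^q` with `p < q` is a meagre
subset of `ℝ^q`. -/
theorem polynomial_map_range_meagre (p q : ℕ) (hpq : p < q)
    (P : Fin q → MvPolynomial (Fin p) ℝ) :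
    IsMeagre (Set.range fun x : Fin p → ℝ =>
      fun j : Fin q => MvPolynomial.eval x (P j)) := by
  set f : (Fin p → ℝ) → (Fin q → ℝ) :=
    fun x => fun j => MvPolynomial.eval x (P j) with hf
  -- the extension of `f` to a map `ℝ^q → ℝ^q`
  set F : (Fin q → ℝ) → (Fin q → ℝ) :=
    fun y => fun j => MvPolynomial.eval (fun i : Fin p => y (Fin.castLE hpq.le i)) (P j) with hF
  have hFdiff : Differentiable ℝ F := by
    rw [hF]
    apply differentiable_pi.mpr
    intro j
    exact (mvpoly_differentiable (P j)).comp
      (ContinuousLinearMap.pi (fun i : Fin p =>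
        ContinuousLinearMap.proj (R := ℝ) (φ := fun _ : Fin q => ℝ)
          (Fin.castLE hpq.le i))).differentiable
  -- the hyperplane `{y | y ⟨p, hpq⟩ = 0}`
  set jp : Fin q := ⟨p, hpq⟩ with hjp
  set V : Submodule ℝ (Fin q → ℝ) :=
    LinearMap.ker (LinearMap.proj (R := ℝ) (φ := fun _ : Fin q => ℝ) jp) with hV
  have hVne : V ≠ ⊤ := by
    intro h
    have : (fun _ : Fin q => (1 : ℝ)) ∈ V := h ▸ Submodule.mem_top
    simpa [hV] using this
  have hVnull : volume (V : Set (Fin q → ℝ)) = 0 :=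
    Measure.addHaar_submodule volume V hVne
  -- range f ⊆ F '' V
  have hsub : Set.range f ⊆ F '' (V : Set (Fin q → ℝ)) := by
    rintro _ ⟨x, rfl⟩
    refine ⟨fun j => if h : (j : ℕ) < p then x ⟨j, h⟩ else 0, ?_, ?_⟩
    · simp [hV, LinearMap.mem_ker, hjp]
    · funext j
      simp only [hF, hf]
      have hx : (fun i : Fin p =>
          (fun j' : Fin q => if h : (j' : ℕ) < p then x ⟨j', h⟩ else 0)
            (Fin.castLE hpq.le i)) = x := by
        funext i
        simp [Fin.castLE, i.isLt]
      rw [hx]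
  have hnull : volume (Set.range f) = 0 := by
    refine measure_mono_null hsub ?_
    exact addHaar_image_eq_zero_of_differentiableOn_of_addHaar_eq_zero volume
      hFdiff.differentiableOn hVnull
  have hcont : Continuous f := by
    apply continuous_pi
    intro j
    exact MvPolynomial.continuous_eval (P j)
  have hsc : IsSigmaCompact (Set.range f) := by
    rw [← Set.image_univ]
    exact isSigmaCompact_univ.image hcont
  exact IsMeagre.of_isSigmaCompact_null hsc hnull
end

section
/- Let E be a real Banach space, q ∈ ℕ, and let π : E → (Fin q → ℝ) be a surjective continuous linear map. Let p ∈ ℕ with p < q and let P : Fin q → MvPolynomial (Fin p) ℝ be a q-tuple of real polynomials in p variables. Then the set {r ∈ E | ∃ x : Fin p → ℝ, π r = (j ↦ eval x (P j))}, i.e. the preimage under π of the range of the polynomial map determined by P, is a meagre subset of E. -/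
open MeasureTheory Set

/-- Abstract form of the final step of the paper's proof of Theorem 1.2: the set of
elements of a Banach space whose image under a surjective continuous linear map onto
`ℝ^q` lies in the range of a polynomial map from `ℝ^p`, `p < q`, is meagre. -/
theorem preimage_of_polynomial_range_meagre
    {E : Type*} [NormedAddCommGroup E] [NormedSpace ℝ E] [CompleteSpace E]
    (q : ℕ) (π : E →L[ℝ] (Fin q → ℝ)) (hπ : Function.Surjective π)
    (p : ℕ) (hpq : p < q) (P : Fin q → MvPolynomial (Fin p) ℝ) :
    IsMeagre {r : E | ∃ x : Fin p → ℝ,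
      π r = fun j : Fin q => MvPolynomial.eval x (P j)} := by
  classical
  set f : (Fin p → ℝ) → (Fin q → ℝ) := fun x j => MvPolynomial.eval x (P j) with hf
  -- differentiability and continuity of `f`
  have hdiff : Differentiable ℝ f := by
    rw [differentiable_pi]
    intro j
    intro x
    exact ((AnalyticOnNhd.eval_mvPolynomial (P j)) x (mem_univ x)).differentiableAt
  have hcont : Continuous f := hdiff.continuous
  -- the range of `f` has measure zero
  let j0 : Fin q := ⟨p, hpq⟩
  let s : Submodule ℝ (Fin q → ℝ) := LinearMap.ker (LinearMap.proj (R := ℝ) (φ := fun _ : Fin q => ℝ) j0)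
  have hsne : s ≠ ⊤ := by
    intro h
    have h1 : Pi.single j0 (1 : ℝ) ∈ s := h ▸ Submodule.mem_top
    simp [s, LinearMap.mem_ker] at h1
  have hμs : volume (s : Set (Fin q → ℝ)) = 0 :=
    Measure.addHaar_submodule volume s hsne
  let g : (Fin q → ℝ) → (Fin q → ℝ) := fun y => f (fun i => y (Fin.castLE hpq.le i))
  have hgdiff : Differentiable ℝ g := by
    apply hdiff.comp
    exact differentiable_pi.mpr fun i => differentiable_apply _
  have hsub : Set.range f ⊆ g '' (s : Set (Fin q → ℝ)) := by
    rintro _ ⟨x, rfl⟩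
    refine ⟨fun i => if h : (i : ℕ) < p then x ⟨i, h⟩ else 0, ?_, ?_⟩
    · simp [s, LinearMap.mem_ker, j0]
    · show f _ = f x
      have : (fun i => (if h : ((Fin.castLE hpq.le i : Fin q) : ℕ) < p then x ⟨_, h⟩ else 0)) = x := by
        funext i
        simp [Fin.castLE]
      funext i
      simp [Fin.castLE]
  have hr0 : volume (Set.range f) = 0 := by
    refine le_antisymm (le_trans (measure_mono hsub) ?_) bot_le
    rw [addHaar_image_eq_zero_of_differentiableOn_of_addHaar_eq_zero volume
      hgdiff.differentiableOn hμs]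
  -- the range of `f` is meagre
  have hcover : Set.range f = ⋃ n : ℕ, f '' Metric.closedBall 0 n := by
    ext y
    constructor
    · rintro ⟨x, rfl⟩
      exact Set.mem_iUnion.mpr ⟨⌈‖x‖⌉₊, ⟨x, by
        simpa [Metric.mem_closedBall] using Nat.le_ceil ‖x‖, rfl⟩⟩
    · rintro h
      obtain ⟨n, x, _, rfl⟩ := Set.mem_iUnion.mp h
      exact ⟨x, rfl⟩
  have hm : IsMeagre (Set.range f) := by
    rw [hcover]
    apply isMeagre_iUnion
    intro n
    have hc : IsCompact (f '' Metric.closedBall 0 n) :=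
      (isCompact_closedBall _ _).image hcont
    have hnd : IsNowhereDense (f '' Metric.closedBall 0 n) := by
      rw [hc.isClosed.isNowhereDense_iff]
      by_contra h
      have hpos : 0 < volume (f '' Metric.closedBall 0 n) :=
        MeasureTheory.Measure.measure_pos_of_nonempty_interior _ (Set.nonempty_iff_ne_empty.mpr h)
      have : volume (f '' Metric.closedBall 0 n) = 0 :=
        measure_mono_null (Set.image_subset_range _ _) hr0
      simp [this] at hpos
    exact isMeagre_iff_countable_union_isNowhereDense.mpr
      ⟨{f '' Metric.closedBall 0 n}, by simpa using hnd, Set.countable_singleton _,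
        by simp⟩
  have hset : {r : E | ∃ x : Fin p → ℝ,
      π r = fun j : Fin q => MvPolynomial.eval x (P j)} = π ⁻¹' (Set.range f) := by
    ext r
    simp [f, Set.range, eq_comm]
  rw [hset]
  exact hm.preimage_of_isOpenMap π.continuous (ContinuousLinearMap.isOpenMap π hπ)
end
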